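/- Suppose k = 2 (so w = 0). For every P̂ ∈ Ŵ₀^Γ with decomposition P̂ = P + P⁰|(1−S) as above, writing P⁰(A) = c_A·X, one has Σ_{A ∈ Γ\Γ₁} c_A = 0, the sum being over any set of coset representatives. -/

import Mathlib

noncomputable section

open Matrix Polynomial Finset Filter MeasureTheory

abbrev SL2Z := Matrix.SpecialLinearGroup (Fin 2) ℤ

/-- the field of rational functions `ℂ(X)`. -/
abbrev RF := RatFunc ℂ

def mc (g : SL2Z) (i j : Fin 2) : ℂ := ((g : Matrix (Fin 2) (Fin 2) ℤ) i j : ℂ)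

def Sm : SL2Z := ⟨!![0, -1; 1, 0], by norm_num [Matrix.det_fin_two_of]⟩
def Tm : SL2Z := ⟨!![1, 1; 0, 1], by norm_num [Matrix.det_fin_two_of]⟩
def Um : SL2Z := Tm * Sm

def negSL (A : SL2Z) : SL2Z := ⟨-A.1, by simp [Matrix.det_neg, A.2]⟩

/-- the Möbius transform `(aX+b)/(cX+d)` as a rational function. -/
def mob (g : SL2Z) : RF :=
  (RatFunc.C (mc g 0 0) * RatFunc.X + RatFunc.C (mc g 0 1)) /
    (RatFunc.C (mc g 1 0) * RatFunc.X + RatFunc.C (mc g 1 1))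

/-- the weight `-w` right action on `ℂ(X)`: `(R|g)(X) = (cX+d)^w R((aX+b)/(cX+d))`. -/
def rfSlash (w : ℕ) (R : RF) (g : SL2Z) : RF :=
  (RatFunc.C (mc g 1 0) * RatFunc.X + RatFunc.C (mc g 1 1)) ^ w *
    (Polynomial.aeval (mob g) R.num / Polynomial.aeval (mob g) R.denom)

/-- right action on families: `(P|g)(A) = P(Ag⁻¹)|g`. -/
def famRf (w : ℕ) (P : SL2Z → RF) (g : SL2Z) : SL2Z → RF :=
  fun A => rfSlash w (P (A * g⁻¹)) g

/-- `V̂_w ⊂ ℂ(X)`, the span of `X^i` for `-1 ≤ i ≤ w+1`. -/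
def MemVhat (w : ℕ) (R : RF) : Prop :=
  ∃ c : ℤ → ℂ, R = ∑ i ∈ Finset.Icc (-1 : ℤ) ((w : ℤ) + 1), c i • RatFunc.X ^ i

/-- `V_w ⊂ ℂ(X)`, the polynomials of degree at most `w`. -/
def MemVpoly (w : ℕ) (R : RF) : Prop :=
  ∃ c : ℕ → ℂ, R = ∑ i ∈ Finset.range (w + 1), c i • RatFunc.X ^ i

/-- membership in `V̂_w^Γ`. -/
structure MemVhatG (Γ : Subgroup SL2Z) (w : ℕ) (P : SL2Z → RF) : Prop where
  mem : ∀ A, MemVhat w (P A)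
  inv : ∀ γ ∈ Γ, ∀ A, P (γ * A) = P A
  parity : ∀ A, P (negSL A) = (-1 : ℂ) ^ w • P A

/-- membership in `V_w^Γ` (with values polynomials of degree at most `w`). -/
structure MemVG (Γ : Subgroup SL2Z) (w : ℕ) (P : SL2Z → RF) : Prop where
  mem : ∀ A, MemVpoly w (P A)
  inv : ∀ γ ∈ Γ, ∀ A, P (γ * A) = P A
  parity : ∀ A, P (negSL A) = (-1 : ℂ) ^ w • P A

/-- the extended space of period polynomials `Ŵ_w^Γ`. -/
def MemWhatG (Γ : Subgroup SL2Z) (w : ℕ) (P : SL2Z → RF) : Prop :=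
  MemVhatG Γ w P ∧ (∀ A, P A + famRf w P Sm A = 0) ∧
    (∀ A, P A + famRf w P Um A + famRf w P (Um * Um) A = 0)

/-- the space of period polynomials `W_w^Γ` (inside `ℂ(X)`-valued maps). -/
def MemWG (Γ : Subgroup SL2Z) (w : ℕ) (P : SL2Z → RF) : Prop :=
  MemVG Γ w P ∧ (∀ A, P A + famRf w P Sm A = 0) ∧
    (∀ A, P A + famRf w P Um A + famRf w P (Um * Um) A = 0)

/-- the family `P⁰(A) = c_A X^{w+1}`. -/
def P0fun (w : ℕ) (c : SL2Z → ℂ) : SL2Z → RF :=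
  fun A => c A • RatFunc.X ^ (w + 1)

/-- the conditions on the coefficients `c_A` of `P⁰`. -/
def IsP0 (Γ : Subgroup SL2Z) (w : ℕ) (c : SL2Z → ℂ) : Prop :=
  (∀ γ ∈ Γ, ∀ A, c (γ * A) = c A) ∧ (∀ A, c (A * Tm) = c A) ∧
    (∀ A, c (negSL A) = (-1 : ℂ) ^ w * c A)

/-- `P̂ = P + P⁰|(1−S)` is the canonical decomposition of `P̂ ∈ Ŵ_w^Γ`. -/
def IsDecomp (Γ : Subgroup SL2Z) (w : ℕ) (Phat P : SL2Z → RF) (c : SL2Z → ℂ) : Prop :=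
  MemVG Γ w P ∧ IsP0 Γ w c ∧
    ∀ A, Phat A = P A + (P0fun w c A - famRf w (P0fun w c) Sm A)

/-- the pairing `⟨·,·⟩` on `V_w`, via coefficients. -/
def pairRF (w : ℕ) (R1 R2 : RF) : ℂ :=
  ∑ n ∈ Finset.range (w + 1),
    (-1 : ℂ) ^ (w - n) * ((w.choose n : ℂ))⁻¹ * R1.num.coeff n * R2.num.coeff (w - n)

/-- the pairing `⟪·,·⟫` on `V_w^Γ`, w.r.t. a set `Rt` of coset representatives of `Γ\Γ₁`. -/
def pairGrf (Γ : Subgroup SL2Z) (w : ℕ) (Rt : Finset SL2Z) (P Q : SL2Z → RF) : ℂ :=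
  ((Γ.index : ℂ))⁻¹ * ∑ A ∈ Rt, pairRF w (P A) (Q A)

/-- `Rt` is a set of representatives for the right cosets `Γ\Γ₁`. -/
def IsTransversal (Γ : Subgroup SL2Z) (Rt : Finset SL2Z) : Prop :=
  Subgroup.IsComplement (Γ : Set SL2Z) (Rt : Set SL2Z)

/-- the extended pairing `{P̂,Q̂}` on `Ŵ_w^Γ`, in terms of decompositions
`P̂ = P + P⁰|(1−S)`, `Q̂ = Q + Q⁰|(1−S)` with `P⁰(A) = c_A X^{w+1}`, `Q⁰(A) = c'_A X^{w+1}`. -/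
def extPair (Γ : Subgroup SL2Z) (k : ℤ) (w : ℕ) (Rt : Finset SL2Z)
    (P : SL2Z → RF) (c : SL2Z → ℂ) (Q : SL2Z → RF) (c' : SL2Z → ℂ) : ℂ :=
  pairGrf Γ w Rt (fun A => famRf w P Tm A - famRf w P Tm⁻¹ A) Q
    + pairGrf Γ w Rt
        (fun A => (2 : ℂ) • (famRf w (P0fun w c) Tm A - famRf w (P0fun w c) Tm⁻¹ A)) Q
    + pairGrf Γ w Rt P
        (fun A => (2 : ℂ) • (famRf w (P0fun w c') Tm⁻¹ A - famRf w (P0fun w c') Tm A))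
    + (if Even k then 0
        else 6 * ((k : ℂ) - 1) / ((k : ℂ) * (Γ.index : ℂ)) * ∑ A ∈ Rt, c A * c' A)

/-! Summing the relations `P̂|(1+S) = 0` and `P̂|(1+U+U²) = 0` over a transversal turns them into
relations for the single rational function `F = Σ_A P̂(A)`, on which weight `0` acts by the
substitution `X ↦ gX`. Since `P` is constant and `c` is constant on right cosets,
`F = a + b (X + X⁻¹)` with `a = Σ_A P(A)` and `b = Σ_A c_A`. The function `X + X⁻¹` is negated by `S`
and its orbit under `U` sums to `3`, so the two relations read `2a = 0` and `3a + 3b = 0`. -/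

theorem Subgroup.IsComplement.sum_comp_mul_right {G M : Type*} [Group G] [AddCommMonoid M]
    {H : Subgroup G} {T : Finset G} (hT : IsComplement (H : Set G) (T : Set G)) {f : G → M}
    (hf : ∀ h ∈ H, ∀ x, f (h * x) = f x) (g : G) :
    ∑ t ∈ T, f (t * g) = ∑ t ∈ T, f t := by
  set r : G → G := fun x => (hT.equiv x).2 with hr
  have r_mem x : r x ∈ T := (hT.equiv x).2.2
  have r_fst_mul x : ((hT.equiv x).1 : G) * r x = x := hT.equiv_fst_mul_equiv_snd x
  have r_mul_left x y (hx : x ∈ H) : r (x * y) = r y := by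
    simp only [hr, hT.equiv_mul_left_of_mem hx]
  have r_self t (ht : t ∈ T) : r t = t :=
    congrArg Subtype.val (hT.equiv_snd_eq_self_of_mem_of_one_mem H.one_mem ht)
  have r_r_mul x y : r (r x * y) = r (x * y) := by
    conv_rhs => rw [← r_fst_mul x, mul_assoc]
    exact (r_mul_left _ _ (hT.equiv x).1.2).symm
  refine Finset.sum_nbij' (fun t => r (t * g)) (fun t => r (t * g⁻¹)) (fun t _ => r_mem _)
    (fun t _ => r_mem _) (fun t ht => ?_) (fun t ht => ?_) (fun t _ => ?_)
  · rw [r_r_mul, mul_inv_cancel_right, r_self t ht]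
  · rw [r_r_mul, inv_mul_cancel_right, r_self t ht]
  · conv_lhs => rw [← r_fst_mul (t * g)]
    exact hf _ (hT.equiv _).1.2 _

theorem transcendental_of_notMem_range {k K : Type*} [Field k] [IsAlgClosed k] [Field K]
    [Algebra k K] {x : K} (hx : x ∉ (algebraMap k K).range) : Transcendental k x := fun halg =>
  hx <| minpoly.mem_range_of_degree_eq_one k x <|
    IsAlgClosed.degree_eq_one_of_irreducible k (minpoly.irreducible halg.isIntegral)

lemma mc_det (g : SL2Z) : mc g 0 0 * mc g 1 1 - mc g 0 1 * mc g 1 0 = 1 := by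
  have h := g.2
  rw [Matrix.det_fin_two] at h
  simp only [mc]
  exact_mod_cast h

lemma mob_eq_div (g : SL2Z) :
    mob g = algebraMap ℂ[X] RF (C (mc g 0 0) * X + C (mc g 0 1)) /
      algebraMap ℂ[X] RF (C (mc g 1 0) * X + C (mc g 1 1)) := by
  simp [mob, RatFunc.algebraMap_C, RatFunc.algebraMap_X]

lemma transcendental_mob (g : SL2Z) : Transcendental ℂ (mob g) := by
  refine transcendental_of_notMem_range fun ⟨z, hz⟩ => ?_
  have hden : C (mc g 1 0) * X + C (mc g 1 1) ≠ 0 := fun h => by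
    have h0 := congrArg (coeff · 0) h
    have h1 := congrArg (coeff · 1) h
    simp only [coeff_add, mul_coeff_zero, coeff_C_zero, coeff_X_zero, mul_zero, zero_add,
      coeff_zero, coeff_mul_X, coeff_C_succ, add_zero] at h0 h1
    simpa [h0, h1] using mc_det g
  rw [mob_eq_div, eq_div_iff (RatFunc.algebraMap_ne_zero hden), RatFunc.algebraMap_eq_C,
    ← RatFunc.algebraMap_C, ← map_mul] at hz
  have h := RatFunc.algebraMap_injective ℂ hz
  have h0 := congrArg (coeff · 0) h
  have h1 := congrArg (coeff · 1) h
  simp only [mul_coeff_zero, coeff_C_zero, coeff_add, coeff_X_zero, mul_zero, zero_add,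
    coeff_C_mul, coeff_mul_X, coeff_C_succ, add_zero] at h0 h1
  have := mc_det g
  rw [← h0, ← h1] at this
  exact one_ne_zero (this.symm.trans (by ring))

lemma nonZeroDivisors_le_comap_aeval_mob (g : SL2Z) :
    nonZeroDivisors ℂ[X] ≤ (nonZeroDivisors RF).comap (aeval (mob g)) := fun _ hp =>
  mem_nonZeroDivisors_of_ne_zero fun h =>
    nonZeroDivisors.ne_zero hp (transcendental_iff.mp (transcendental_mob g) _ h)

def slashZero (g : SL2Z) : RF →ₐ[ℂ] RF :=
  RatFunc.liftAlgHom (aeval (mob g)) (nonZeroDivisors_le_comap_aeval_mob g)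

lemma rfSlash_zero_eq (R : RF) (g : SL2Z) : rfSlash 0 R g = slashZero g R := by
  simp [rfSlash, slashZero, RatFunc.liftAlgHom_apply]

lemma slashZero_X (g : SL2Z) : slashZero g RatFunc.X = mob g := by
  rw [← RatFunc.algebraMap_X, slashZero, RatFunc.liftAlgHom_apply]
  simp

lemma mob_Sm : mob Sm = -RatFunc.X⁻¹ := by
  simp [mob, mc, Sm, div_eq_mul_inv]

lemma coe_Um : (Um : Matrix (Fin 2) (Fin 2) ℤ) = !![1, -1; 1, 0] := by
  ext i j; fin_cases i <;> fin_cases j <;> rfl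

lemma mob_Um : mob Um = (RatFunc.X - 1) / RatFunc.X := by
  simp [mob, mc, coe_Um, sub_eq_add_neg]

lemma mob_Um_mul_Um : mob (Um * Um) = -1 / (RatFunc.X - 1) := by
  simp [mob, mc, Matrix.SpecialLinearGroup.coe_mul, coe_Um, sub_eq_add_neg]

lemma slashZero_X_add_inv (g : SL2Z) :
    slashZero g (RatFunc.X + RatFunc.X⁻¹) = mob g + (mob g)⁻¹ := by
  rw [map_add, map_inv₀, slashZero_X]

lemma X_add_inv_add_slashZero_Sm :
    RatFunc.X + RatFunc.X⁻¹ + slashZero Sm (RatFunc.X + RatFunc.X⁻¹) = 0 := by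
  rw [slashZero_X_add_inv, mob_Sm]
  field_simp
  ring

lemma X_add_inv_add_slashZero_Um_add_slashZero_Um_mul_Um :
    RatFunc.X + RatFunc.X⁻¹ + slashZero Um (RatFunc.X + RatFunc.X⁻¹)
      + slashZero (Um * Um) (RatFunc.X + RatFunc.X⁻¹) = 3 := by
  have hX : (RatFunc.X : RF) ≠ 0 := RatFunc.X_ne_zero
  have hX1 : (RatFunc.X : RF) - 1 ≠ 0 := by
    rw [← RatFunc.algebraMap_X, ← map_one (algebraMap ℂ[X] RF), ← map_sub]
    exact RatFunc.algebraMap_ne_zero (X_sub_C_ne_zero 1)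
  rw [slashZero_X_add_inv, slashZero_X_add_inv, mob_Um, mob_Um_mul_Um]
  field_simp
  ring

lemma sum_famRf_zero {Γ : Subgroup SL2Z} {Rt : Finset SL2Z} (hRt : IsTransversal Γ Rt)
    {Q : SL2Z → RF} (hQ : ∀ γ ∈ Γ, ∀ A, Q (γ * A) = Q A) (g : SL2Z) :
    ∑ A ∈ Rt, famRf 0 Q g A = slashZero g (∑ A ∈ Rt, Q A) := by
  simp only [famRf, rfSlash_zero_eq, map_sum]
  exact Subgroup.IsComplement.sum_comp_mul_right hRt (f := fun A => slashZero g (Q A))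
    (fun γ hγ A => by rw [hQ γ hγ]) g⁻¹

lemma exists_eq_algebraMap_of_memVpoly_zero {R : RF} (hR : MemVpoly 0 R) :
    ∃ a : ℂ, R = algebraMap ℂ RF a := by
  obtain ⟨c, rfl⟩ := hR
  exact ⟨c 0, by simp [Algebra.smul_def]⟩

lemma eq_zero_of_slashZero_relations {a b : ℂ} {F : RF}
    (hF : F = algebraMap ℂ RF a + algebraMap ℂ RF b * (RatFunc.X + RatFunc.X⁻¹))
    (hS : F + slashZero Sm F = 0) (hU : F + slashZero Um F + slashZero (Um * Um) F = 0) :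
    b = 0 := by
  subst hF
  have hslash (g : SL2Z) :
      slashZero g (algebraMap ℂ RF a + algebraMap ℂ RF b * (RatFunc.X + RatFunc.X⁻¹)) =
        algebraMap ℂ RF a + algebraMap ℂ RF b * slashZero g (RatFunc.X + RatFunc.X⁻¹) := by
    rw [map_add, map_mul, AlgHom.commutes, AlgHom.commutes]
  rw [hslash] at hS
  rw [hslash, hslash] at hU
  have ha : algebraMap ℂ RF (2 * a) = 0 := by
    rw [map_mul, map_ofNat]
    linear_combination hS - algebraMap ℂ RF b * X_add_inv_add_slashZero_Sm
  have hab : algebraMap ℂ RF (3 * a + 3 * b) = 0 := by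
    simp only [map_add, map_mul, map_ofNat]
    linear_combination
      hU - algebraMap ℂ RF b * X_add_inv_add_slashZero_Um_add_slashZero_Um_mul_Um
  rw [map_eq_zero] at ha hab
  linear_combination hab / 3 - ha / 2

theorem statement15_general (Γ : Subgroup SL2Z)
    (Phat : SL2Z → RF) (hPhat : MemWhatG Γ 0 Phat)
    (P : SL2Z → RF) (c : SL2Z → ℂ) (hdec : IsDecomp Γ 0 Phat P c)
    (Rt : Finset SL2Z) (hRt : IsTransversal Γ Rt) :
    ∑ A ∈ Rt, c A = 0 := by
  obtain ⟨hPhatV, hPhatS, hPhatU⟩ := hPhat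
  obtain ⟨hPV, ⟨hcΓ, -, -⟩, hPhat_eq⟩ := hdec
  choose p hp using fun A => exists_eq_algebraMap_of_memVpoly_zero (hPV.mem A)
  have hP0Γ : ∀ γ ∈ Γ, ∀ A, P0fun 0 c (γ * A) = P0fun 0 c A := fun γ hγ A => by
    simp only [P0fun, hcΓ γ hγ]
  have hF : ∑ A ∈ Rt, Phat A =
      algebraMap ℂ RF (∑ A ∈ Rt, p A)
        + algebraMap ℂ RF (∑ A ∈ Rt, c A) * (RatFunc.X + RatFunc.X⁻¹) := by
    simp only [hPhat_eq, sum_add_distrib, sum_sub_distrib, sum_famRf_zero hRt hP0Γ, hp, map_sum]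
    simp only [P0fun, zero_add, pow_one, Algebra.smul_def, ← sum_mul, map_mul, AlgHom.commutes,
      slashZero_X, mob_Sm]
    ring
  refine eq_zero_of_slashZero_relations hF ?_ ?_
  · rw [← sum_famRf_zero hRt hPhatV.inv, ← sum_add_distrib]
    exact sum_eq_zero fun A _ => hPhatS A
  · rw [← sum_famRf_zero hRt hPhatV.inv, ← sum_famRf_zero hRt hPhatV.inv, ← sum_add_distrib,
      ← sum_add_distrib]
    exact sum_eq_zero fun A _ => hPhatU A

/-- for `k = 2` (so `w = 0`), the coefficients `c_A` of the decomposition of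
any `P̂ ∈ Ŵ₀^Γ` satisfy `Σ_{A ∈ Γ\Γ₁} c_A = 0`. -/
theorem statement15 (Γ : Subgroup SL2Z) [Γ.FiniteIndex]
    (Phat : SL2Z → RF) (hPhat : MemWhatG Γ 0 Phat)
    (P : SL2Z → RF) (c : SL2Z → ℂ) (hdec : IsDecomp Γ 0 Phat P c)
    (Rt : Finset SL2Z) (hRt : IsTransversal Γ Rt) :
    ∑ A ∈ Rt, c A = 0 :=
  statement15_general Γ Phat hPhat P c hdec Rt hRt
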